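/- (Intelligence is bounded away from 0 and 1.) Assume Γ_1 > 0 and there are percepts e⁰, e¹ ∈ E with r(e⁰) = 0 and r(e¹) = 1. Let M be a countable class of CCSs containing the heaven environment ν¹ (deterministically emitting e¹ at every step) and the hell environment ν⁰ (deterministically emitting e⁰ at every step), let w : M → ℝ satisfy w(ν) > 0 for all ν ∈ M and Σ_{ν ∈ M} w(ν) ≤ 1, and let ξ := Σ_{ν ∈ M} w(ν)·ν. Then for every policy π, w(ν¹) ≤ Υ_ξ(π) ≤ 1 − w(ν⁰); in particular 0 < Υ_ξ(π) < 1. -/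

import Mathlib

open scoped Classical

/-- A history: a finite alternating sequence of action–percept pairs. -/
abbrev Hist (A E : Type*) := List (A × E)

/-- A policy maps histories to actions. -/
abbrev Policy (A E : Type*) := Hist A E → A

/-- A chronological conditional semimeasure (CCS, environment):
values in `[0,1]`, and the chronological semimeasure condition. -/
structure CCS (A E : Type*) [Fintype E] where
  val : Hist A E → ℝ
  nonneg : ∀ h, 0 ≤ val h
  le_one : ∀ h, val h ≤ 1
  chrono : ∀ (h : Hist A E) (a : A), (∑ e : E, val (h ++ [(a, e)])) ≤ val h

/-- `Gam γ t = Γ_t = ∑_{i ≥ t} γ_i`, the discount normalization factor. -/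
noncomputable def Gam (γ : ℕ → ℝ) (t : ℕ) : ℝ := ∑' i : ℕ, γ (t + i)

/-- Extend a history by a list of percepts, with actions chosen by the policy `π`. -/
def extendH {A E : Type*} (π : Policy A E) : Hist A E → List E → Hist A E
  | h, [] => h
  | h, e :: es => extendH π (h ++ [(π h, e)]) es

/-- The value `V^π_ν(ae_{<t})` of policy `π` in environment `ν` given history `h = ae_{<t}`
(with `t = h.length + 1`); `0` whenever `Γ_t ≤ 0` or `ν(e_{<t} ∣ a_{<t}) ≤ 0`. -/
noncomputable def V {A E : Type*} [Fintype E] (γ : ℕ → ℝ) (r : E → ℝ)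
    (π : Policy A E) (ν : CCS A E) (h : Hist A E) : ℝ :=
  if 0 < Gam γ (h.length + 1) ∧ 0 < ν.val h then
    (1 / (Gam γ (h.length + 1) * ν.val h)) *
      ∑' n : ℕ, γ (h.length + 1 + n) *
        ∑ es : Fin (n + 1) → E,
          r (es (Fin.last n)) * ν.val (extendH π h (List.ofFn es))
  else 0

/-- The value `V^π_ν(h a)` of a history ending in the action `a`:
the action at time `t` is `a`, and `π` is followed from time `t+1` on. -/
noncomputable def Vact {A E : Type*} [Fintype E] (γ : ℕ → ℝ) (r : E → ℝ)
    (π : Policy A E) (ν : CCS A E) (h : Hist A E) (a : A) : ℝ :=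
  V γ r (fun h' => if h' = h then a else π h') ν h

/-- The optimal value `V^*_ν(h) = sup_π V^π_ν(h)`. -/
noncomputable def VOpt {A E : Type*} [Fintype E] (γ : ℕ → ℝ) (r : E → ℝ)
    (ν : CCS A E) (h : Hist A E) : ℝ :=
  ⨆ π : Policy A E, V γ r π ν h

/-- The optimal value `V^*_ν(h a)` of a history ending in an action. -/
noncomputable def VOptAct {A E : Type*} [Fintype E] (γ : ℕ → ℝ) (r : E → ℝ)
    (ν : CCS A E) (h : Hist A E) (a : A) : ℝ :=
  ⨆ π : Policy A E, Vact γ r π ν h a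

/-- A history is consistent with `π` iff each of its actions is the one chosen by `π`. -/
def Consistent {A E : Type*} (π : Policy A E) (h : Hist A E) : Prop :=
  ∀ (k : ℕ) (hk : k < h.length), (h.get ⟨k, hk⟩).1 = π (h.take k)

/-- The deterministic environment always emitting the percept `e`. -/
noncomputable def detEnv {A E : Type*} (e : E) (h : Hist A E) : ℝ :=
  if ∀ p ∈ h, p.2 = e then 1 else 0

/-!
Write `ξ = ξ(ϵ)`. The unnormalised expected reward at each time step is at least `w(ν¹)`, since
`ξ ≥ w(ν¹) ν¹` and `ν¹` collects reward `1` with probability `1`. It is at most `ξ - w(ν⁰)`: the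
measure `ξ - w(ν⁰) ν⁰` is nonnegative and has total mass at most `ξ - w(ν⁰)`, rewards are at most
`1`, and `ν⁰` collects reward `0`. Averaging over the discount gives
`w(ν¹) / ξ ≤ Υ_ξ(π) ≤ 1 - w(ν⁰) / ξ`, and `ξ ≤ 1`.
-/

open Finset

section

variable {A E : Type*}

lemma map_snd_extendH (π : Policy A E) :
    ∀ (h : Hist A E) (l : List E), (extendH π h l).map Prod.snd = h.map Prod.snd ++ l
  | h, [] => by simp [extendH]
  | h, e :: es => by simp [extendH, map_snd_extendH π _ es]

lemma detEnv_extendH_ofFn (e : E) (π : Policy A E) {n : ℕ} (es : Fin n → E) :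
    detEnv e (extendH π [] (List.ofFn es)) = if es = fun _ => e then 1 else 0 := by
  have hsnd := map_snd_extendH π [] (List.ofFn es)
  simp only [List.map_nil, List.nil_append] at hsnd
  have hall : (∀ p ∈ extendH π [] (List.ofFn es), p.2 = e) ↔ es = fun _ => e := by
    rw [← List.forall_mem_map (f := Prod.snd) (P := (· = e)), hsnd, funext_iff]
    simp [List.mem_ofFn]
  simp only [detEnv, hall]

variable [Fintype E]

/-- `∑_{e_{t:t+n}} ν(e_{1:t+n} ∣ a_{1:t+n})` for the history `h = ae_{<t}` continued by `π`. -/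
def pathMass (π : Policy A E) (ν : Hist A E → ℝ) (h : Hist A E) (n : ℕ) : ℝ :=
  ∑ es : Fin n → E, ν (extendH π h (List.ofFn es))

/-- `∑_{e_{t:t+n}} r(e_{t+n}) ν(e_{1:t+n} ∣ a_{1:t+n})`, the inner sum in the definition of `V`. -/
def rewardMass (r : E → ℝ) (π : Policy A E) (ν : Hist A E → ℝ) (h : Hist A E) (n : ℕ) : ℝ :=
  ∑ es : Fin (n + 1) → E, r (es (Fin.last n)) * ν (extendH π h (List.ofFn es))

variable {r : E → ℝ} {π : Policy A E} {ν ν' : Hist A E → ℝ} {c : ℝ}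

lemma CCS.pathMass_le (π : Policy A E) (ν : CCS A E) :
    ∀ (n : ℕ) (h : Hist A E), pathMass π ν.val h n ≤ ν.val h
  | 0, h => by simp [pathMass, extendH]
  | n + 1, h => by
      have hsplit : pathMass π ν.val h (n + 1) =
          ∑ e : E, pathMass π ν.val (h ++ [(π h, e)]) n := by
        rw [pathMass, ← (Fin.consEquiv fun _ => E).sum_comp, Fintype.sum_prod_type]
        simp [pathMass, Fin.consEquiv, List.ofFn_succ, extendH]
      calc pathMass π ν.val h (n + 1)
          ≤ ∑ e : E, ν.val (h ++ [(π h, e)]) := by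
            rw [hsplit]
            exact sum_le_sum fun e _ => CCS.pathMass_le π ν n _
        _ ≤ ν.val h := ν.chrono h (π h)

lemma mul_rewardMass_le (hr : ∀ e, 0 ≤ r e) (hc : ∀ h, c * ν' h ≤ ν h) (h : Hist A E) (n : ℕ) :
    c * rewardMass r π ν' h n ≤ rewardMass r π ν h n := by
  rw [rewardMass, mul_sum]
  refine sum_le_sum fun es _ => ?_
  rw [mul_left_comm]
  exact mul_le_mul_of_nonneg_left (hc _) (hr _)

/-- Rewards are at most `1` and `ν - c ν'` is nonnegative. -/
lemma rewardMass_sub_le (hr : ∀ e, r e ≤ 1) (hc : ∀ h, c * ν' h ≤ ν h) (h : Hist A E) (n : ℕ) :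
    rewardMass r π ν h n - c * rewardMass r π ν' h n ≤
      pathMass π ν h (n + 1) - c * pathMass π ν' h (n + 1) := by
  simp only [rewardMass, pathMass, mul_sum, ← sum_sub_distrib]
  refine sum_le_sum fun es _ => ?_
  rw [mul_left_comm, ← mul_sub]
  exact mul_le_of_le_one_left (sub_nonneg.2 (hc _)) (hr _)

lemma pathMass_detEnv (e : E) (π : Policy A E) (n : ℕ) :
    pathMass π (detEnv e) [] n = 1 := by
  simp [pathMass, detEnv_extendH_ofFn]

lemma rewardMass_detEnv (r : E → ℝ) (e : E) (π : Policy A E) (n : ℕ) :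
    rewardMass r π (detEnv e) [] n = r e := by
  simp only [rewardMass, detEnv_extendH_ofFn, mul_ite, mul_one, mul_zero, sum_ite_eq', mem_univ,
    if_true]

lemma mul_val_le_of_mixture {M : Set (CCS A E)} {w : CCS A E → ℝ} {ξ ν : CCS A E}
    (hw : ∀ ν ∈ M, 0 ≤ w ν) (hws : Summable fun ν : M => w ν)
    (hξ : ∀ h, ξ.val h = ∑' ν : M, w ν * (ν : CCS A E).val h) (hν : ν ∈ M) (h : Hist A E) :
    w ν * ν.val h ≤ ξ.val h := by
  have hterm : ∀ ν : M, 0 ≤ w ν * (ν : CCS A E).val h :=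
    fun ν => mul_nonneg (hw ν ν.2) (ν.1.nonneg h)
  rw [hξ h]
  refine Summable.le_tsum (f := fun ν : M => w ν * (ν : CCS A E).val h) ?_ ⟨ν, hν⟩
    fun ν _ => hterm ν
  exact hws.of_nonneg_of_le hterm fun ν => mul_le_of_le_one_right (hw ν ν.2) (ν.1.le_one h)

/-- `V` is a `γ`-weighted average of the normalised reward masses. -/
lemma V_mem_Icc_of_rewardMass_mem_Icc {γ : ℕ → ℝ} (hγ0 : ∀ t, 0 ≤ γ t) (hγs : Summable γ)
    {ν : CCS A E} {h : Hist A E} (hΓ : 0 < Gam γ (h.length + 1)) (hν : 0 < ν.val h)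
    {lo hi : ℝ} (hlo : 0 ≤ lo) (hT : ∀ n, rewardMass r π ν.val h n ∈ Set.Icc lo hi) :
    V γ r π ν h ∈ Set.Icc (lo / ν.val h) (hi / ν.val h) := by
  set t := h.length + 1
  have hγt : Summable fun n => γ (t + n) := by
    simpa only [add_comm t] using (summable_nat_add_iff t).2 hγs
  have hS : Summable fun n => γ (t + n) * rewardMass r π ν.val h n :=
    (hγt.mul_right hi).of_nonneg_of_le
      (fun n => mul_nonneg (hγ0 _) (hlo.trans (hT n).1))
      (fun n => mul_le_mul_of_nonneg_left (hT n).2 (hγ0 _))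
  have hlow : lo * Gam γ t ≤ ∑' n, γ (t + n) * rewardMass r π ν.val h n := by
    rw [Gam, ← tsum_mul_left]
    exact (hγt.mul_left lo).tsum_le_tsum
      (fun n => by rw [mul_comm]; exact mul_le_mul_of_nonneg_left (hT n).1 (hγ0 _)) hS
  have hhigh : ∑' n, γ (t + n) * rewardMass r π ν.val h n ≤ hi * Gam γ t := by
    rw [Gam, ← tsum_mul_left]
    exact hS.tsum_le_tsum
      (fun n => by rw [mul_comm hi]; exact mul_le_mul_of_nonneg_left (hT n).2 (hγ0 _))
      (hγt.mul_left hi)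
  have hV : V γ r π ν h = (∑' n, γ (t + n) * rewardMass r π ν.val h n) / Gam γ t / ν.val h := by
    rw [V, if_pos ⟨hΓ, hν⟩, div_div, one_div_mul_eq_div]
    rfl
  rw [hV]
  exact ⟨div_le_div_of_nonneg_right ((le_div_iff₀ hΓ).2 hlow) hν.le,
    div_le_div_of_nonneg_right ((div_le_iff₀ hΓ).2 hhigh) hν.le⟩

end

theorem intelligence_bounded_general {A E : Type*} [Fintype E]
    (γ : ℕ → ℝ) (hγ0 : ∀ t, 0 ≤ γ t) (hγs : Summable γ)
    (r : E → ℝ) (hr : ∀ e : E, 0 ≤ r e ∧ r e ≤ 1)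
    (hΓ1 : 0 < Gam γ 1)
    (e0 e1 : E) (hr0 : r e0 = 0) (hr1 : r e1 = 1)
    (M : Set (CCS A E))
    (ν0 ν1 : CCS A E) (hν0M : ν0 ∈ M) (hν1M : ν1 ∈ M)
    (hν0 : ∀ h : Hist A E, ν0.val h = detEnv e0 h)
    (hν1 : ∀ h : Hist A E, ν1.val h = detEnv e1 h)
    (w : CCS A E → ℝ) (hwpos : ∀ ν ∈ M, 0 < w ν)
    (hws : Summable (fun ν : M => w ν))
    (ξ : CCS A E)
    (hξ : ∀ h : Hist A E, ξ.val h = ∑' ν : M, w ν * (ν : CCS A E).val h)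
    (π : Policy A E) :
    w ν1 ≤ V γ r π ξ [] ∧ V γ r π ξ [] ≤ 1 - w ν0 ∧
    0 < V γ r π ξ [] ∧ V γ r π ξ [] < 1 := by
  have hdom : ∀ ν ∈ M, ∀ h, w ν * ν.val h ≤ ξ.val h :=
    fun ν hν => mul_val_le_of_mixture (fun ν hν => (hwpos ν hν).le) hws hξ hν
  rw [← funext_iff] at hν0 hν1
  have hw1ξ : w ν1 ≤ ξ.val [] := by simpa [hν1, detEnv] using hdom ν1 hν1M []
  have hξpos : 0 < ξ.val [] := (hwpos ν1 hν1M).trans_le hw1ξ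
  have hT : ∀ n, rewardMass r π ξ.val [] n ∈ Set.Icc (w ν1) (ξ.val [] - w ν0) := by
    intro n
    have hlo := mul_rewardMass_le (π := π) (fun e => (hr e).1) (hdom ν1 hν1M) [] n
    have hhi := rewardMass_sub_le (π := π) (fun e => (hr e).2) (hdom ν0 hν0M) [] n
    rw [hν1, rewardMass_detEnv, hr1, mul_one] at hlo
    rw [hν0, rewardMass_detEnv, pathMass_detEnv, hr0] at hhi
    exact ⟨hlo, by linarith [ξ.pathMass_le π (n + 1) []]⟩
  obtain ⟨hVlo, hVhi⟩ := V_mem_Icc_of_rewardMass_mem_Icc (h := []) hγ0 hγs hΓ1 hξpos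
    (hwpos ν1 hν1M).le hT
  have hlow : w ν1 ≤ V γ r π ξ [] :=
    (le_div_self (hwpos ν1 hν1M).le hξpos (ξ.le_one [])).trans hVlo
  have hhigh : V γ r π ξ [] ≤ 1 - w ν0 := by
    refine hVhi.trans ?_
    rw [sub_div, div_self hξpos.ne']
    linarith [le_div_self (hwpos ν0 hν0M).le hξpos (ξ.le_one [])]
  exact ⟨hlow, hhigh, (hwpos ν1 hν1M).trans_le hlow,
    hhigh.trans_lt (by linarith [hwpos ν0 hν0M])⟩

/-- **Intelligence is bounded away from 0 and 1.** If the class contains the heaven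
and hell environments, every policy's intelligence lies in `[w(ν¹), 1 − w(ν⁰)] ⊆ (0,1)`. -/
theorem intelligence_bounded {A E : Type*} [Fintype A] [Nonempty A] [Fintype E] [Nonempty E]
    (γ : ℕ → ℝ) (hγ0 : ∀ t, 0 ≤ γ t) (hγs : Summable γ)
    (r : E → ℝ) (hr : ∀ e : E, 0 ≤ r e ∧ r e ≤ 1)
    (hΓ1 : 0 < Gam γ 1)
    (e0 e1 : E) (hr0 : r e0 = 0) (hr1 : r e1 = 1)
    (M : Set (CCS A E)) (hMc : M.Countable)
    (ν0 ν1 : CCS A E) (hν0M : ν0 ∈ M) (hν1M : ν1 ∈ M)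
    (hν0 : ∀ h : Hist A E, ν0.val h = detEnv e0 h)
    (hν1 : ∀ h : Hist A E, ν1.val h = detEnv e1 h)
    (w : CCS A E → ℝ) (hwpos : ∀ ν ∈ M, 0 < w ν)
    (hws : Summable (fun ν : M => w ν)) (hw1 : (∑' ν : M, w ν) ≤ 1)
    (ξ : CCS A E)
    (hξ : ∀ h : Hist A E, ξ.val h = ∑' ν : M, w ν * (ν : CCS A E).val h)
    (π : Policy A E) :
    w ν1 ≤ V γ r π ξ [] ∧ V γ r π ξ [] ≤ 1 - w ν0 ∧
    0 < V γ r π ξ [] ∧ V γ r π ξ [] < 1 :=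
  intelligence_bounded_general γ hγ0 hγs r hr hΓ1 e0 e1 hr0 hr1 M ν0 ν1 hν0M hν1M hν0 hν1 w hwpos
    hws ξ hξ π
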